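/- For the infinite graph D_∞ (a one-way infinite path with an extra leaf attached to the second vertex — i.e., two leaves v_1, v_2 both adjacent to v_3, and v_j adjacent to v_{j+1} for all j ≥ 3), the measure μ with μ(v_1) = μ(v_2) = 1 and μ(v_j) = 2 for j ≥ 3 satisfies C_μ = 3; in particular C_{D_∞} ≤ 3. -/

import Mathlib

open scoped ENNReal

/-- The graph `D_∞`: two leaves `0` and `1` both adjacent to `2`, and a one-way
infinite path `2 - 3 - 4 - ⋯`. -/
def Dinfty : SimpleGraph ℕ :=
  SimpleGraph.fromRel (fun i j =>
    (i = 0 ∧ j = 2) ∨ (i = 1 ∧ j = 2) ∨ (2 ≤ i ∧ j = i + 1))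

/-- The μ-measure (in `ℝ≥0∞`) of the closed ball of center `v` and real radius `r`
in the path metric of `Dinfty`. -/
noncomputable def dBallMeasure (μ : ℕ → ℝ≥0∞) (v : ℕ) (r : ℝ) : ℝ≥0∞ :=
  ∑' w : {w : ℕ // (Dinfty.dist v w : ℝ) ≤ r}, μ w

/-- The doubling constant `C_μ = sup_{v, r ≥ 0} μ(B(v,2r))/μ(B(v,r))` on `Dinfty`. -/
noncomputable def dDoubling (μ : ℕ → ℝ≥0∞) : ℝ≥0∞ :=
  ⨆ v : ℕ, ⨆ r : {r : ℝ // 0 ≤ r}, dBallMeasure μ v (2 * (r : ℝ)) / dBallMeasure μ v (r : ℝ)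

/-!
Balls of `D_∞` are explicit: around a vertex far from the leaves a ball of radius `k` is a
segment of `2k + 1` path vertices (mass `4k + 2`), and once it reaches the leaves it is an
initial segment of the graph. Comparing these masses for radii `k` and `2k + 1` gives the
ratio bound `3`; it is attained at a leaf, whose ball of radius `0` has mass `1` while the
ball of radius `1` (the leaf and `2`) has mass `3`.
-/

open Finset

namespace SimpleGraph

variable {V : Type*} {G : SimpleGraph V} {d : V → V → ℕ}

theorem Walk.le_length_of_lipschitz (hd : ∀ w, d w w = 0)
    (hlip : ∀ u v w, G.Adj u v → d u w ≤ d v w + 1) {u w : V} (p : G.Walk u w) :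
    d u w ≤ p.length := by
  induction p with
  | nil => simp [hd]
  | cons h p ih => rw [Walk.length_cons]; exact (hlip _ _ _ h).trans (by omega)

theorem exists_walk_length_eq_of_descent (hd : ∀ w, d w w = 0)
    (hdesc : ∀ v w, v ≠ w → ∃ u, G.Adj v u ∧ d v w = d u w + 1) (v w : V) :
    ∃ p : G.Walk v w, p.length = d v w := by
  induction hn : d v w generalizing v with
  | zero =>
    by_cases hvw : v = w
    · subst hvw; exact ⟨Walk.nil, rfl⟩
    · obtain ⟨u, -, hu⟩ := hdesc v w hvw; omega
  | succ n ih =>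
    have hvw : v ≠ w := by rintro rfl; rw [hd] at hn; omega
    obtain ⟨u, huv, hu⟩ := hdesc v w hvw
    obtain ⟨p, hp⟩ := ih u (by omega)
    exact ⟨Walk.cons huv p, by rw [Walk.length_cons, hp]⟩

theorem dist_eq_of_lipschitz_of_descent (hd : ∀ w, d w w = 0)
    (hlip : ∀ u v w, G.Adj u v → d u w ≤ d v w + 1)
    (hdesc : ∀ v w, v ≠ w → ∃ u, G.Adj v u ∧ d v w = d u w + 1) (v w : V) :
    G.dist v w = d v w := by
  obtain ⟨p, hp⟩ := exists_walk_length_eq_of_descent hd hdesc v w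
  obtain ⟨q, hq⟩ := p.reachable.exists_walk_length_eq_dist
  exact le_antisymm (hp ▸ G.dist_le p) (hq ▸ q.le_length_of_lipschitz hd hlip)

end SimpleGraph

theorem Nat.floor_two_mul_le {R : Type*} [Field R] [LinearOrder R] [IsStrictOrderedRing R]
    [FloorSemiring R] (r : R) : ⌊2 * r⌋₊ ≤ 2 * ⌊r⌋₊ + 1 := by
  refine Nat.lt_succ_iff.mp ((Nat.floor_lt' (by omega)).mpr ?_)
  push_cast
  linarith [Nat.lt_floor_add_one r]

lemma dinfty_adj_iff (i j : ℕ) : Dinfty.Adj i j ↔ i ≠ j ∧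
    ((i = 0 ∧ j = 2) ∨ (i = 1 ∧ j = 2) ∨ (2 ≤ i ∧ j = i + 1) ∨
     (j = 0 ∧ i = 2) ∨ (j = 1 ∧ i = 2) ∨ (2 ≤ j ∧ i = j + 1)) := by
  rw [Dinfty, SimpleGraph.fromRel_adj]
  tauto

/-- `v - 1` is the level of `v` along the path; truncated subtraction puts both leaves at
level `0`, so only two distinct leaves need a correction. -/
def dinftyDist (v w : ℕ) : ℕ :=
  if v ≠ w ∧ v ≤ 1 ∧ w ≤ 1 then 2 else Nat.dist (v - 1) (w - 1)

theorem dinfty_dist_eq (v w : ℕ) : Dinfty.dist v w = dinftyDist v w := by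
  refine SimpleGraph.dist_eq_of_lipschitz_of_descent (fun w => ?_) (fun u v w h => ?_)
    (fun v w h => ?_) v w
  · simp [dinftyDist, Nat.dist_self]
  · rw [dinfty_adj_iff] at h
    simp only [dinftyDist, Nat.dist]
    split_ifs <;> omega
  · refine ⟨if v ≤ 1 then 2 else if v < w then v + 1 else if v = 2 then w else v - 1, ?_, ?_⟩
    · rw [dinfty_adj_iff]; split_ifs <;> omega
    · simp only [dinftyDist, Nat.dist]; split_ifs <;> omega

def dinftyBall (v k : ℕ) : Finset ℕ :=
  (range (v + k + 2)).filter (dinftyDist v · ≤ k)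

lemma mem_dinftyBall {v k w : ℕ} : w ∈ dinftyBall v k ↔ dinftyDist v w ≤ k := by
  rw [dinftyBall, mem_filter, mem_range, and_iff_right_iff_imp]
  simp only [dinftyDist, Nat.dist]
  split_ifs <;> omega

theorem dBallMeasure_eq_sum (μ : ℕ → ℝ≥0∞) (v : ℕ) {r : ℝ} (hr : 0 ≤ r) :
    dBallMeasure μ v r = ∑ w ∈ dinftyBall v ⌊r⌋₊, μ w := by
  rw [dBallMeasure, ← Finset.tsum_subtype]
  refine tsum_congr_subtype μ fun w => ?_
  rw [mem_dinftyBall, dinfty_dist_eq, Nat.le_floor_iff hr]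

lemma dinftyBall_leaf_zero {v : ℕ} (hv : v ≤ 1) : dinftyBall v 0 = {v} := by
  ext w
  rw [mem_dinftyBall, mem_singleton]
  simp only [dinftyDist, Nat.dist]
  split_ifs <;> omega

lemma dinftyBall_leaf_one {v : ℕ} (hv : v ≤ 1) : dinftyBall v 1 = {v, 2} := by
  ext w
  rw [mem_dinftyBall, mem_insert, mem_singleton]
  simp only [dinftyDist, Nat.dist]
  split_ifs <;> omega

lemma dinftyBall_leaf {v k : ℕ} (hv : v ≤ 1) (hk : 2 ≤ k) :
    dinftyBall v k = insert 0 (insert 1 (Icc 2 (k + 1))) := by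
  ext w
  rw [mem_dinftyBall, mem_insert, mem_insert, mem_Icc]
  simp only [dinftyDist, Nat.dist]
  split_ifs <;> omega

lemma dinftyBall_of_le {v k : ℕ} (hv : 2 ≤ v) (hvk : v ≤ k + 1) :
    dinftyBall v k = insert 0 (insert 1 (Icc 2 (v + k))) := by
  ext w
  rw [mem_dinftyBall, mem_insert, mem_insert, mem_Icc]
  simp only [dinftyDist, Nat.dist]
  split_ifs <;> omega

lemma dinftyBall_of_lt {v k : ℕ} (hvk : k + 2 ≤ v) : dinftyBall v k = Icc (v - k) (v + k) := by
  ext w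
  rw [mem_dinftyBall, mem_Icc]
  simp only [dinftyDist, Nat.dist]
  split_ifs <;> omega

def leafWeight (j : ℕ) : ℕ := if j ≤ 1 then 1 else 2

def leafWeightBallMass (v k : ℕ) : ℕ :=
  if v ≤ 1 then (if k = 0 then 1 else if k = 1 then 3 else 2 * k + 2)
  else if v ≤ k + 1 then 2 * (v + k) else 4 * k + 2

lemma sum_Icc_leafWeight {a b : ℕ} (ha : 2 ≤ a) :
    ∑ w ∈ Icc a b, leafWeight w = 2 * (b + 1 - a) := by
  have hw2 : ∀ w ∈ Icc a b, leafWeight w = 2 := fun w hw => if_neg (by rw [mem_Icc] at hw; omega)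
  rw [sum_congr rfl hw2, sum_const, Nat.card_Icc, smul_eq_mul, mul_comm]

lemma sum_leaves_Icc_leafWeight {n : ℕ} (hn : 1 ≤ n) :
    ∑ w ∈ insert 0 (insert 1 (Icc 2 n)), leafWeight w = 2 * n := by
  rw [sum_insert (by simp), sum_insert (by simp), sum_Icc_leafWeight le_rfl]
  norm_num [leafWeight]
  omega

theorem sum_dinftyBall_leafWeight (v k : ℕ) :
    ∑ w ∈ dinftyBall v k, leafWeight w = leafWeightBallMass v k := by
  unfold leafWeightBallMass
  split_ifs with hv hk0 hk1 hvk
  · rw [hk0, dinftyBall_leaf_zero hv, sum_singleton, leafWeight, if_pos hv]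
  · rw [hk1, dinftyBall_leaf_one hv, sum_pair (by omega)]
    simp [leafWeight, hv]
  · rw [dinftyBall_leaf hv (by omega), sum_leaves_Icc_leafWeight (by omega)]; ring
  · rw [dinftyBall_of_le (by omega) hvk, sum_leaves_Icc_leafWeight (by omega)]
  · rw [dinftyBall_of_lt (by omega), sum_Icc_leafWeight (by omega)]; omega

lemma leafWeightBallMass_le_three_mul {v k k' : ℕ} (hk : k' ≤ 2 * k + 1) :
    leafWeightBallMass v k' ≤ 3 * leafWeightBallMass v k := by
  unfold leafWeightBallMass
  split_ifs <;> omega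

theorem dBallMeasure_leafWeight (v : ℕ) {r : ℝ} (hr : 0 ≤ r) :
    dBallMeasure (fun j => if j ≤ 1 then 1 else 2) v r = leafWeightBallMass v ⌊r⌋₊ := by
  have hcast : (fun j : ℕ => if j ≤ 1 then (1 : ℝ≥0∞) else 2) = fun j => (leafWeight j : ℝ≥0∞) := by
    funext j; unfold leafWeight; split_ifs <;> simp
  rw [hcast, dBallMeasure_eq_sum _ v hr, ← Nat.cast_sum, sum_dinftyBall_leafWeight]

theorem dDoubling_leafWeight : dDoubling (fun j => if j ≤ 1 then 1 else 2) = 3 := by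
  refine le_antisymm (iSup₂_le fun v ⟨r, hr⟩ => ?_) ?_
  · rw [dBallMeasure_leafWeight v (by positivity), dBallMeasure_leafWeight v hr]
    refine ENNReal.div_le_of_le_mul ?_
    exact_mod_cast leafWeightBallMass_le_three_mul (Nat.floor_two_mul_le r)
  · have hratio : dBallMeasure (fun j => if j ≤ 1 then 1 else 2) 0 (2 * (1 / 2 : ℝ)) /
        dBallMeasure (fun j => if j ≤ 1 then 1 else 2) 0 (1 / 2 : ℝ) = 3 := by
      rw [dBallMeasure_leafWeight 0 (by norm_num), dBallMeasure_leafWeight 0 (by norm_num)]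
      norm_num [Nat.floor_eq_zero, leafWeightBallMass]
    exact le_iSup₂_of_le 0 ⟨1 / 2, by norm_num⟩ hratio.ge

/-- on `D_∞` the measure giving weight 1 to the two leaves and 2 to all
other vertices has doubling constant exactly 3; in particular `C_{D_∞} ≤ 3`. -/
theorem stmt_19 :
    dDoubling (fun j => if j ≤ 1 then 1 else 2) = 3 ∧
    (⨅ μ : {f : ℕ → ℝ≥0∞ // ∀ v, 0 < f v ∧ f v ≠ ⊤}, dDoubling μ.1) ≤ 3 := by
  refine ⟨dDoubling_leafWeight, iInf_le_of_le ⟨fun j => if j ≤ 1 then 1 else 2, fun v => ?_⟩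
    dDoubling_leafWeight.le⟩
  dsimp only
  split_ifs <;> simp
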